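/- With hypotheses as in the previous construction, the quantity R_{J+1} = ∫_{[0, N(2N)^J]} 𝕄₀(ξ/(2N)^{J+1}) ∏_{k=1}^{J} |m₀(ξ/(2N)^k)|² dξ satisfies R_{J+1} = R_J for every J ≥ 1, and R₁ = ∫_{[0,N)} 𝕄₀(ξ/(2N)) dξ = 1/2; hence R_J = 1/2 for all J. -/

import Mathlib

/-!
Write `m₀(u + q/2) = m₀¹(u) + e^{-iπrq/N} · e^{-2πiur/N} m₀²(u)`. Since both phases have modulus
one, `|m₀(u + q/2)|² = 𝕄₀(u) + 2 Re (e^{-iπrq/N} A(u))` with `A(u)` independent of `q`; weighting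
by `𝕄₀(u/(2N) + q/(4N))` and summing over `q < 2N`, the two identities satisfied by `𝕄₀` kill the
cross term and leave `𝕄₀(u)`.

Cut `[0, N(2N)^J]` into `2N` translates of `[0, N(2N)^{J-1}]` by multiples of `c = N(2N)^{J-1}`.
Since `m₀` is `N`-periodic, the factors `|m₀(ξ/(2N)^k)|²` with `k < J` do not see the translation,
and the identity above (at `u = ξ/(2N)^J`) turns the sum of the translates of the integrand of
`R_{J+1}` into the integrand of `R_J`. The same cut with `c = 1/2` gives `R₁ = 1/2`.
-/

open MeasureTheory Complex Real ComplexConjugate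

noncomputable section

/-- The integrand of R_J. -/
def RIntegrand (N : ℕ) (M0 : ℝ → ℝ) (m0 : ℝ → ℂ) (J : ℕ) (ξ : ℝ) : ℝ :=
  M0 (ξ / ((2 * N : ℝ)) ^ J) * ∏ k ∈ Finset.Icc 1 (J - 1), ‖m0 (ξ / ((2 * N : ℝ)) ^ k)‖ ^ 2

/-- The quantity R_J. -/
def RQ (N : ℕ) (M0 : ℝ → ℝ) (m0 : ℝ → ℂ) (J : ℕ) : ℝ :=
  ∫ ξ in Set.Icc (0 : ℝ) ((N : ℝ) * (2 * N : ℝ) ^ (J - 1)), RIntegrand N M0 m0 J ξ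

theorem ae_comp_div {c : ℝ} (hc : c ≠ 0) {p : ℝ → Prop} (h : ∀ᵐ x, p x) :
    ∀ᵐ x, p (x / c) := by
  simpa only [smul_eq_mul, div_eq_inv_mul] using
    (Measure.quasiMeasurePreserving_smul volume (inv_ne_zero hc)).ae h

theorem integral_Icc_nat_mul_eq_of_sum_translates {f g : ℝ → ℝ} {c : ℝ} (hc : 0 ≤ c) {n : ℕ}
    (hf : IntegrableOn f (Set.Icc 0 (n * c)))
    (hfg : ∀ᵐ x, ∑ q ∈ Finset.range n, f (x + q * c) = g x) :
    ∫ x in Set.Icc 0 (n * c), f x = ∫ x in Set.Icc 0 c, g x := by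
  have hpiece : ∀ q < n, IntervalIntegrable f volume (q * c) ((q + 1) * c) := by
    intro q hq
    have hq : (q : ℝ) + 1 ≤ n := by exact_mod_cast hq
    refine (hf.mono_set ?_).intervalIntegrable
    rw [Set.uIcc_of_le (by nlinarith)]
    exact Set.Icc_subset_Icc (by positivity) (by nlinarith)
  have htranslate : ∀ q < n, IntervalIntegrable (fun x => f (x + q * c)) volume 0 c := by
    intro q hq
    convert (hpiece q hq).comp_add_right (q * c) using 1 <;> ring
  calc ∫ x in Set.Icc 0 (n * c), f x
      = ∑ q ∈ Finset.range n, ∫ x in q * c..(q + 1) * c, f x := by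
        rw [integral_Icc_eq_integral_Ioc, ← intervalIntegral.integral_of_le (by positivity)]
        simpa using (intervalIntegral.sum_integral_adjacent_intervals (a := fun q : ℕ => q * c)
          (by exact_mod_cast hpiece)).symm
    _ = ∫ x in 0..c, ∑ q ∈ Finset.range n, f (x + q * c) := by
        rw [intervalIntegral.integral_finsetSum fun q hq => htranslate q (Finset.mem_range.1 hq)]
        refine Finset.sum_congr rfl fun q _ => ?_
        rw [intervalIntegral.integral_comp_add_right]
        ring_nf
    _ = ∫ x in Set.Icc 0 c, g x := by
        rw [intervalIntegral.integral_congr_ae (hfg.mono fun x hx _ => hx),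
          intervalIntegral.integral_of_le hc, integral_Icc_eq_integral_Ioc]

theorem Complex.norm_add_mul_sq_of_norm_eq_one {w : ℂ} (hw : ‖w‖ = 1) (a b : ℂ) :
    ‖a + w * b‖ ^ 2 = ‖a‖ ^ 2 + ‖b‖ ^ 2 + 2 * (w * (b * conj a)).re := by
  have hw' : normSq w = 1 := by rw [normSq_eq_norm_sq, hw, one_pow]
  simp only [← normSq_eq_norm_sq, normSq_add, normSq_mul, hw', one_mul]
  rw [← conj_re]
  simp only [map_mul, conj_conj]
  ring_nf

section

variable {N : ℕ} {r : ℤ} {m01 m02 m0 : ℝ → ℂ} {M0 : ℝ → ℝ}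

theorem m0_periodic (hN : N ≠ 0)
    (hper1 : Function.Periodic m01 (1 / 2)) (hper2 : Function.Periodic m02 (1 / 2))
    (hm0 : ∀ ξ : ℝ, m0 ξ = m01 ξ + exp (-2 * π * I * ξ * r / N) * m02 ξ) :
    Function.Periodic m0 N := by
  have hhalf : ((2 * N : ℕ) : ℝ) * (1 / 2) = N := by push_cast; ring
  intro u
  rw [hm0, hm0, ← hhalf, hper1.nat_mul, hper2.nat_mul, hhalf]
  have hexp :
      -2 * π * I * ↑(u + N) * r / N = -2 * π * I * u * r / N + (-r : ℤ) * (2 * π * I) := by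
    push_cast
    field_simp
    ring
  rw [hexp, Complex.exp_add, exp_int_mul_two_pi_mul_I, mul_one]

theorem norm_sq_m0_add_half_mul
    (hper1 : Function.Periodic m01 (1 / 2)) (hper2 : Function.Periodic m02 (1 / 2))
    (hm0 : ∀ ξ : ℝ, m0 ξ = m01 ξ + exp (-2 * π * I * ξ * r / N) * m02 ξ)
    (hM0 : ∀ ξ : ℝ, M0 ξ = ‖m01 ξ‖ ^ 2 + ‖m02 ξ‖ ^ 2) (u : ℝ) (q : ℕ) :
    ‖m0 (u + q * (1 / 2))‖ ^ 2 =
      M0 u + 2 * (exp (-π * I * r * q / N) *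
        (exp (-2 * π * I * u * r / N) * m02 u * conj (m01 u))).re := by
  have hexp : exp (-2 * π * I * ↑(u + q * (1 / 2)) * r / N)
      = exp (-π * I * r * q / N) * exp (-2 * π * I * u * r / N) := by
    rw [← Complex.exp_add]
    push_cast
    ring_nf
  have hnorm : ‖exp (-2 * π * I * u * r / N)‖ = 1 := by rw [norm_exp]; simp
  rw [hm0, hper1.nat_mul, hper2.nat_mul, hexp, mul_assoc,
    Complex.norm_add_mul_sq_of_norm_eq_one (by rw [norm_exp]; simp), norm_mul, hnorm, one_mul, hM0,
    mul_assoc]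

theorem sum_norm_sq_m0_add_half_mul_mul_eq
    (hper1 : Function.Periodic m01 (1 / 2)) (hper2 : Function.Periodic m02 (1 / 2))
    (hm0 : ∀ ξ : ℝ, m0 ξ = m01 ξ + exp (-2 * π * I * ξ * r / N) * m02 ξ)
    (hM0 : ∀ ξ : ℝ, M0 ξ = ‖m01 ξ‖ ^ 2 + ‖m02 ξ‖ ^ 2) (u : ℝ) (G : ℕ → ℝ)
    (hG1 : ∑ p ∈ Finset.range (2 * N), G p = 1)
    (hG2 : ∑ p ∈ Finset.range (2 * N), exp (-π * I * r * p / N) * (G p : ℂ) = 0) :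
    ∑ p ∈ Finset.range (2 * N), ‖m0 (u + p * (1 / 2))‖ ^ 2 * G p = M0 u := by
  set A := exp (-2 * π * I * u * r / N) * m02 u * conj (m01 u)
  have hcross : ∑ p ∈ Finset.range (2 * N), 2 * (exp (-π * I * r * p / N) * A).re * G p
      = (2 * A * ∑ p ∈ Finset.range (2 * N), exp (-π * I * r * p / N) * (G p : ℂ)).re := by
    rw [Finset.mul_sum, Complex.re_sum]
    refine Finset.sum_congr rfl fun p _ => ?_
    generalize exp (-π * I * r * p / N) = e
    rw [show 2 * A * (e * (G p : ℂ)) = e * A * ((2 * G p : ℝ) : ℂ) by push_cast; ring,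
      re_mul_ofReal]
    ring
  calc ∑ p ∈ Finset.range (2 * N), ‖m0 (u + p * (1 / 2))‖ ^ 2 * G p
      = M0 u * ∑ p ∈ Finset.range (2 * N), G p
        + ∑ p ∈ Finset.range (2 * N), 2 * (exp (-π * I * r * p / N) * A).re * G p := by
        simp only [norm_sq_m0_add_half_mul hper1 hper2 hm0 hM0, add_mul, Finset.sum_add_distrib,
          Finset.mul_sum]
        rfl
    _ = M0 u := by rw [hcross, hG1, hG2]; simp

theorem RIntegrand_add_two_add_nat_mul (hN : N ≠ 0) (hm0 : Function.Periodic m0 N)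
    (J q : ℕ) (x : ℝ) :
    RIntegrand N M0 m0 (J + 2) (x + q * (N * (2 * N) ^ J))
      = ‖m0 (x / (2 * N) ^ (J + 1) + q * (1 / 2))‖ ^ 2
          * M0 (x / (2 * N) ^ (J + 1) / (2 * N) + q / (4 * N))
          * ∏ k ∈ Finset.Icc 1 J, ‖m0 (x / (2 * N) ^ k)‖ ^ 2 := by
  have hN' : (N : ℝ) ≠ 0 := Nat.cast_ne_zero.2 hN
  have hfactor : ∀ k ∈ Finset.Icc 1 J,
      m0 ((x + q * (N * (2 * N) ^ J)) / (2 * N) ^ k) = m0 (x / (2 * N) ^ k) := by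
    intro k hk
    obtain ⟨j, rfl⟩ := Nat.exists_eq_add_of_le (Finset.mem_Icc.1 hk).2
    have hshift : (x + q * (N * (2 * N) ^ (k + j))) / (2 * N) ^ k
        = x / (2 * N) ^ k + ((q * (2 * N) ^ j : ℕ) : ℝ) * N := by
      push_cast
      field_simp
      ring
    rw [hshift, hm0.nat_mul]
  have hlast : (x + q * (N * (2 * N) ^ J)) / (2 * N) ^ (J + 1)
      = x / (2 * N) ^ (J + 1) + q * (1 / 2) := by
    field_simp
    ring
  have hlast' : (x + q * (N * (2 * N) ^ J)) / (2 * N) ^ (J + 2)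
      = x / (2 * N) ^ (J + 1) / (2 * N) + q / (4 * N) := by
    field_simp
    ring
  rw [RIntegrand, show J + 2 - 1 = J + 1 from rfl, Finset.prod_Icc_succ_top (by omega),
    Finset.prod_congr rfl fun k hk => by rw [hfactor k hk], hlast, hlast']
  ring

theorem ae_sum_RIntegrand_add_two_translates_eq (hN : N ≠ 0)
    (hper1 : Function.Periodic m01 (1 / 2)) (hper2 : Function.Periodic m02 (1 / 2))
    (hm0 : ∀ ξ : ℝ, m0 ξ = m01 ξ + exp (-2 * π * I * ξ * r / N) * m02 ξ)
    (hM0 : ∀ ξ : ℝ, M0 ξ = ‖m01 ξ‖ ^ 2 + ‖m02 ξ‖ ^ 2)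
    (hid1 : ∀ᵐ ξ : ℝ, (∑ p ∈ Finset.range (2 * N), M0 (ξ + (p : ℝ) / (4 * N))) = 1)
    (hid2 : ∀ᵐ ξ : ℝ, (∑ p ∈ Finset.range (2 * N),
        exp (-π * I * r * p / N) * (M0 (ξ + (p : ℝ) / (4 * N)) : ℂ)) = 0) (J : ℕ) :
    ∀ᵐ x : ℝ, ∑ q ∈ Finset.range (2 * N), RIntegrand N M0 m0 (J + 2) (x + q * (N * (2 * N) ^ J))
      = RIntegrand N M0 m0 (J + 1) x := by
  have hscale : (2 * N : ℝ) ^ (J + 1) * (2 * N) ≠ 0 := by positivity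
  filter_upwards [ae_comp_div hscale hid1, ae_comp_div hscale hid2] with x h1 h2
  rw [← div_div] at h1 h2
  simp only [RIntegrand_add_two_add_nat_mul hN (m0_periodic hN hper1 hper2 hm0), ← Finset.sum_mul,
    sum_norm_sq_m0_add_half_mul_mul_eq hper1 hper2 hm0 hM0 _ _ h1 h2]
  rfl

theorem RQ_add_two (hN : N ≠ 0)
    (hper1 : Function.Periodic m01 (1 / 2)) (hper2 : Function.Periodic m02 (1 / 2))
    (hm0 : ∀ ξ : ℝ, m0 ξ = m01 ξ + exp (-2 * π * I * ξ * r / N) * m02 ξ)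
    (hM0 : ∀ ξ : ℝ, M0 ξ = ‖m01 ξ‖ ^ 2 + ‖m02 ξ‖ ^ 2)
    (hid1 : ∀ᵐ ξ : ℝ, (∑ p ∈ Finset.range (2 * N), M0 (ξ + (p : ℝ) / (4 * N))) = 1)
    (hid2 : ∀ᵐ ξ : ℝ, (∑ p ∈ Finset.range (2 * N),
        exp (-π * I * r * p / N) * (M0 (ξ + (p : ℝ) / (4 * N)) : ℂ)) = 0) (J : ℕ)
    (hint : IntegrableOn (RIntegrand N M0 m0 (J + 2))
        (Set.Icc (0 : ℝ) ((N : ℝ) * (2 * N : ℝ) ^ (J + 1)))) :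
    RQ N M0 m0 (J + 2) = RQ N M0 m0 (J + 1) := by
  have hend : (N : ℝ) * (2 * N : ℝ) ^ (J + 1) = ((2 * N : ℕ) : ℝ) * (N * (2 * N) ^ J) := by
    push_cast
    ring
  rw [hend] at hint
  rw [RQ, RQ, show J + 2 - 1 = J + 1 from rfl, hend]
  exact integral_Icc_nat_mul_eq_of_sum_translates (by positivity) hint
    (ae_sum_RIntegrand_add_two_translates_eq hN hper1 hper2 hm0 hM0 hid1 hid2 J)

theorem RQ_one (hN : N ≠ 0)
    (hid1 : ∀ᵐ ξ : ℝ, (∑ p ∈ Finset.range (2 * N), M0 (ξ + (p : ℝ) / (4 * N))) = 1)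
    (hint : IntegrableOn (RIntegrand N M0 m0 1) (Set.Icc (0 : ℝ) N)) :
    RQ N M0 m0 1 = 1 / 2 := by
  have hend : (N : ℝ) = ((2 * N : ℕ) : ℝ) * (1 / 2) := by
    push_cast
    ring
  have htranslate : ∀ (q : ℕ) (x : ℝ),
      RIntegrand N M0 m0 1 (x + q * (1 / 2)) = M0 (x / (2 * N) + q / (4 * N)) := by
    intro q x
    have hN' : (N : ℝ) ≠ 0 := Nat.cast_ne_zero.2 hN
    rw [RIntegrand, Nat.sub_self, Finset.Icc_eq_empty (by norm_num), Finset.prod_empty, mul_one,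
      pow_one]
    congr 1
    field_simp
    ring
  rw [hend] at hint
  rw [RQ, Nat.sub_self, pow_zero, mul_one, hend,
    integral_Icc_nat_mul_eq_of_sum_translates (g := fun _ => 1) (by norm_num) hint]
  · simp
  · filter_upwards [ae_comp_div (by positivity : (2 * N : ℝ) ≠ 0) hid1] with x hx
    simpa only [htranslate] using hx

end

theorem RQ_eq_half_general (N : ℕ) (r : ℤ) (hN : 1 ≤ N)
    (m01 m02 : ℝ → ℂ)
    (hper1 : Function.Periodic m01 (1 / 2)) (hper2 : Function.Periodic m02 (1 / 2))
    (m0 : ℝ → ℂ)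
    (hm0 : ∀ ξ : ℝ, m0 ξ = m01 ξ + Complex.exp (-2 * π * I * ξ * r / N) * m02 ξ)
    (M0 : ℝ → ℝ) (hM0 : ∀ ξ : ℝ, M0 ξ = ‖m01 ξ‖ ^ 2 + ‖m02 ξ‖ ^ 2)
    (hid1 : ∀ᵐ ξ : ℝ, (∑ p ∈ Finset.range (2 * N), M0 (ξ + (p : ℝ) / (4 * N))) = 1)
    (hid2 : ∀ᵐ ξ : ℝ, (∑ p ∈ Finset.range (2 * N),
        Complex.exp (-π * I * r * p / N) * (M0 (ξ + (p : ℝ) / (4 * N)) : ℂ)) = 0)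
    (hint : ∀ J : ℕ, IntegrableOn (RIntegrand N M0 m0 J)
        (Set.Icc (0 : ℝ) ((N : ℝ) * (2 * N : ℝ) ^ (J - 1))) volume) :
    (∀ J : ℕ, 1 ≤ J → RQ N M0 m0 (J + 1) = RQ N M0 m0 J) ∧
    RQ N M0 m0 1 = 1 / 2 ∧
    (∀ J : ℕ, 1 ≤ J → RQ N M0 m0 J = 1 / 2) := by
  have hN0 : N ≠ 0 := by omega
  have step : ∀ J : ℕ, 1 ≤ J → RQ N M0 m0 (J + 1) = RQ N M0 m0 J := by
    intro J hJ
    obtain ⟨J, rfl⟩ := Nat.exists_eq_add_of_le' hJ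
    exact RQ_add_two hN0 hper1 hper2 hm0 hM0 hid1 hid2 J (hint (J + 2))
  have base : RQ N M0 m0 1 = 1 / 2 := RQ_one hN0 hid1 (by simpa using hint 1)
  refine ⟨step, base, fun J hJ => ?_⟩
  induction J, hJ using Nat.le_induction with
  | base => exact base
  | succ J hJ ih => rw [step J hJ, ih]

/-- R_{J+1} = R_J for every J ≥ 1 and R₁ = 1/2; hence R_J = 1/2 for all J ≥ 1. -/
theorem RQ_eq_half (N : ℕ) (r : ℤ) (hN : 1 ≤ N) (hodd : Odd r)
    (hr1 : 1 ≤ r) (hr2 : r ≤ 2 * (N : ℤ) - 1) (hcop : Int.gcd r (N : ℤ) = 1)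
    (m01 m02 : ℝ → ℂ)
    (hper1 : Function.Periodic m01 (1 / 2)) (hper2 : Function.Periodic m02 (1 / 2))
    (m0 : ℝ → ℂ)
    (hm0 : ∀ ξ : ℝ, m0 ξ = m01 ξ + Complex.exp (-2 * π * I * ξ * r / N) * m02 ξ)
    (M0 : ℝ → ℝ) (hM0 : ∀ ξ : ℝ, M0 ξ = ‖m01 ξ‖ ^ 2 + ‖m02 ξ‖ ^ 2)
    (hid1 : ∀ᵐ ξ : ℝ, (∑ p ∈ Finset.range (2 * N), M0 (ξ + (p : ℝ) / (4 * N))) = 1)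
    (hid2 : ∀ᵐ ξ : ℝ, (∑ p ∈ Finset.range (2 * N),
        Complex.exp (-π * I * r * p / N) * (M0 (ξ + (p : ℝ) / (4 * N)) : ℂ)) = 0)
    (hint : ∀ J : ℕ, IntegrableOn (RIntegrand N M0 m0 J)
        (Set.Icc (0 : ℝ) ((N : ℝ) * (2 * N : ℝ) ^ (J - 1))) volume) :
    (∀ J : ℕ, 1 ≤ J → RQ N M0 m0 (J + 1) = RQ N M0 m0 J) ∧
    RQ N M0 m0 1 = 1 / 2 ∧
    (∀ J : ℕ, 1 ≤ J → RQ N M0 m0 J = 1 / 2) :=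
  RQ_eq_half_general N r hN m01 m02 hper1 hper2 m0 hm0 M0 hM0 hid1 hid2 hint

end
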